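/- arXiv:1510.05774 — 3 statements merged into one kernel-verified Lean document; each statement's English description precedes it below -/
import Mathlib

section
/- Let A = (V, V0, V1, E, v_I) be an arena and w : E → ℤ a weight function. Player 0 wins the game (A, AvgEnergy_L(w, t)) for some threshold t ∈ ℕ if, and only if, Player 0 wins the game (A, Energy_LU(w, cap)) for some capacity cap ∈ ℕ. -/
/-- An arena: a directed graph without terminal vertices, a set `V0` of Player 0's
vertices (Player 1 controls the complement), and an initial vertex. -/
structure Arena (V : Type) where
  V0 : Set V
  E : V → V → Prop
  vI : V
  succ : ∀ v, ∃ v', E v v'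

/-- A play: an infinite path starting in the initial vertex. -/
def Arena.Play {V : Type} (A : Arena V) (ρ : ℕ → V) : Prop :=
  ρ 0 = A.vI ∧ ∀ n, A.E (ρ n) (ρ (n + 1))

/-- The play prefix `ρ 0 ⋯ ρ n` as a list. -/
def prefixList {V : Type} (ρ : ℕ → V) (n : ℕ) : List V :=
  (List.range (n + 1)).map ρ

/-- A strategy for the player controlling the vertices in `p`. -/
def Arena.IsStrategy {V : Type} (A : Arena V) (p : Set V) (σ : List V → V) : Prop :=
  ∀ (h : List V) (v : V), v ∈ p → A.E v (σ (h ++ [v]))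

/-- Consistency of a play with a strategy of the player controlling `p`. -/
def Arena.ConsistentWith {V : Type} (A : Arena V) (p : Set V) (σ : List V → V) (ρ : ℕ → V) : Prop :=
  ∀ n, ρ n ∈ p → ρ (n + 1) = σ (prefixList ρ n)

/-- `σ` is a winning strategy for the player controlling `p` with objective `Obj`. -/
def Arena.WinningStrategy {V : Type} (A : Arena V) (p : Set V) (Obj : Set (ℕ → V))
    (σ : List V → V) : Prop :=
  A.IsStrategy p σ ∧ ∀ ρ, A.Play ρ → A.ConsistentWith p σ ρ → ρ ∈ Obj

/-- Player 0 wins the game `(A, Win)`. -/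
def Arena.Player0Wins {V : Type} (A : Arena V) (Win : Set (ℕ → V)) : Prop :=
  ∃ σ, A.WinningStrategy A.V0 Win σ

/-- `h` is a finite play prefix consistent with the strategy `σ` of the player controlling `p`. -/
def Arena.FinPrefix {V : Type} (A : Arena V) (p : Set V) (σ : List V → V) (h : List V) : Prop :=
  ∃ ρ n, A.Play ρ ∧ A.ConsistentWith p σ ρ ∧ h = prefixList ρ n

/-- A positional strategy only depends on the last vertex. -/
def Positional {X : Type} (σ : List X → X) : Prop :=
  ∀ (h : List X) (v : X), σ (h ++ [v]) = σ [v]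

/-- The energy level of the play prefix `ρ 0 ⋯ ρ n` is `EL w ρ n`:
the sum of the weights of its `n` edges. -/
def EL {V : Type} (w : V → V → ℤ) (ρ : ℕ → V) (n : ℕ) : ℤ :=
  ∑ i ∈ Finset.range n, w (ρ i) (ρ (i + 1))

/-- The energy level of a finite play prefix given as a list. -/
def ELl {V : Type} (w : V → V → ℤ) : List V → ℤ
  | [] => 0
  | [_] => 0
  | a :: b :: l => w a b + ELl w (b :: l)

/-- The average accumulated energy of the first `n` prefixes. -/
noncomputable def avgEL {V : Type} (w : V → V → ℤ) (ρ : ℕ → V) (n : ℕ) : ℝ :=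
  (∑ i ∈ Finset.range n, (EL w ρ i : ℝ)) / (n : ℝ)

/-- The lower-bounded energy objective. -/
def EnergyL {V : Type} (w : V → V → ℤ) : Set (ℕ → V) :=
  {ρ | ∀ n, 0 ≤ EL w ρ n}

/-- The lower- and upper-bounded energy objective. -/
def EnergyLU {V : Type} (w : V → V → ℤ) (cap : ℕ) : Set (ℕ → V) :=
  {ρ | ∀ n, 0 ≤ EL w ρ n ∧ EL w ρ n ≤ (cap : ℤ)}

/-- The average-energy objective: limsup of the averages is at most `t`. -/
def AvgE {V : Type} (w : V → V → ℤ) (t : ℝ) : Set (ℕ → V) :=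
  {ρ | Filter.limsup (fun n => (avgEL w ρ n : EReal)) Filter.atTop ≤ (t : EReal)}

/-- The lower-bounded average-energy objective. -/
def AvgEnergyL {V : Type} (w : V → V → ℤ) (t : ℝ) : Set (ℕ → V) :=
  EnergyL w ∩ AvgE w t

/-- The mean-payoff objective. -/
def MP {V : Type} (w : V → V → ℤ) (t : ℝ) : Set (ℕ → V) :=
  {ρ | Filter.limsup (fun n => (((EL w ρ n : ℝ) / (n : ℝ)) : EReal)) Filter.atTop ≤ (t : EReal)}

/-- A memory structure: initial memory state and update along edges. -/
structure Mem (V M : Type) where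
  mI : M
  upd : M → V → V → M

/-- Tracking the memory state along a play. -/
def Mem.track {V M : Type} (mem : Mem V M) (ρ : ℕ → V) : ℕ → M
  | 0 => mem.mI
  | n + 1 => mem.upd (Mem.track mem ρ n) (ρ n) (ρ (n + 1))

def Mem.runAux {V M : Type} (mem : Mem V M) : M → List V → M
  | m, [] => m
  | m, [_] => m
  | m, a :: b :: l => Mem.runAux mem (mem.upd m a b) (b :: l)

/-- `Upd⁺`: the memory state reached along a finite play prefix. -/
def Mem.run {V M : Type} (mem : Mem V M) (h : List V) : M :=
  Mem.runAux mem mem.mI h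

/-- The strategy `σ` is implemented by the memory structure `mem`
(via some next-move function). -/
def Arena.ImplementedBy {V M : Type} (A : Arena V) (mem : Mem V M) (σ : List V → V) : Prop :=
  ∃ nxt : V → M → V, ∀ (h : List V) (v : V), σ (h ++ [v]) = nxt v (mem.run (h ++ [v]))

/-- `σ` is a finite-state strategy of size `k`. -/
def Arena.FiniteStateOfSize {V : Type} (A : Arena V) (k : ℕ) (σ : List V → V) : Prop :=
  ∃ (M : Type) (inst : Fintype M) (mem : Mem V M),
    @Fintype.card M inst = k ∧ A.ImplementedBy mem σ

/-- The expanded arena `A × M`. -/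
def Arena.expand {V M : Type} (A : Arena V) (mem : Mem V M) : Arena (V × M) where
  V0 := {p | p.1 ∈ A.V0}
  E := fun p q => A.E p.1 q.1 ∧ q.2 = mem.upd p.2 p.1 q.1
  vI := (A.vI, mem.mI)
  succ := fun p => by
    obtain ⟨v', h⟩ := A.succ p.1
    exact ⟨(v', mem.upd p.2 p.1 v'), h, rfl⟩

/-- The extended play in `A × M` corresponding to a play in `A`. -/
def extendPlay {V M : Type} (mem : Mem V M) (ρ : ℕ → V) : ℕ → V × M :=
  fun n => (ρ n, Mem.track mem ρ n)

/-- `(A, Win) ≤_M (A × M, Win')`. -/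
def Reduces {V M : Type} (A : Arena V) (mem : Mem V M) (Win : Set (ℕ → V))
    (Win' : Set (ℕ → V × M)) : Prop :=
  ∀ ρ, A.Play ρ → (ρ ∈ Win ↔ extendPlay mem ρ ∈ Win')

/-- A recharge weight function (`none` is the recharge label `R`) assigns
non-positive weights to all (non-recharge) edges. -/
def RechargeWeights {V : Type} (A : Arena V) (w : V → V → Option ℤ) : Prop :=
  ∀ u v, A.E u v → ∀ k : ℤ, w u v = some k → k ≤ 0

/-- The recharge energy level of the prefix `ρ 0 ⋯ ρ n`: the capacity plus the
accumulated weight since the last `R`-edge. -/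
def ELcap {V : Type} (w : V → V → Option ℤ) (cap : ℕ) (ρ : ℕ → V) : ℕ → ℤ
  | 0 => (cap : ℤ)
  | n + 1 =>
    match w (ρ n) (ρ (n + 1)) with
    | none => (cap : ℤ)
    | some k => ELcap w cap ρ n + k

/-- The recharge objective. -/
def Recharge {V : Type} (w : V → V → Option ℤ) (cap : ℕ) : Set (ℕ → V) :=
  {ρ | ∀ n, 0 ≤ ELcap w cap ρ n}

/-- The average of the recharge energy levels of the first `n` prefixes. -/
noncomputable def avgELcap {V : Type} (w : V → V → Option ℤ) (cap : ℕ) (ρ : ℕ → V)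
    (n : ℕ) : ℝ :=
  (∑ i ∈ Finset.range n, (ELcap w cap ρ i : ℝ)) / (n : ℝ)

/-- The average-bounded recharge objective. -/
def AvgRecharge {V : Type} (w : V → V → Option ℤ) (cap : ℕ) (t : ℝ) : Set (ℕ → V) :=
  {ρ | Filter.limsup (fun n => (avgELcap w cap ρ n : EReal)) Filter.atTop ≤ (t : EReal)} ∩
    Recharge w cap

/-- The (max-)parity objective: the maximal color occurring infinitely often is even. -/
def ParityObj {V : Type} (Ω : V → ℕ) : Set (ℕ → V) :=
  {ρ | ∃ c, Even c ∧ {n | Ω (ρ n) = c}.Infinite ∧ ∀ d, {n | Ω (ρ n) = d}.Infinite → d ≤ c}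


/-!
A capacity strategy bounds every energy level, hence every average, by `cap`. Conversely, call a
configuration (vertex, energy level) doomed if from it Player 0 can keep the energy level within
`[0, cap]` for no `cap`, and fix a strategy `σ` of Player 0 under which the energy level never
drops below zero. Player 1 can keep a play from a doomed configuration doomed, and for every `c`
can force the energy level above `c` within `|V| (c + 1)` steps: the configurations of
`V × [0, c]` from which Player 1 cannot do this would give Player 0 a bounded strategy. If the
initial configuration is doomed, Player 1 therefore alternates forcing the energy level above
`c = L W + a` (with `-W` a lower bound on the weights) with `L` further doomed steps, during which
it stays above `a`. For suitable `L` and `a` each round lifts the average energy level above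
`t + 1`, and the rounds converge to a play consistent with `σ` violating `AvgE w t`.
-/

open Filter Set Function

section

variable {V : Type} {w : V → V → ℤ}

def config (w : V → V → ℤ) (ρ : ℕ → V) (n : ℕ) : V × ℤ := (ρ n, EL w ρ n)

def succConfig (w : V → V → ℤ) (p : V × ℤ) (v : V) : V × ℤ := (v, p.2 + w p.1 v)

lemma EL_succ (ρ : ℕ → V) (n : ℕ) : EL w ρ (n + 1) = EL w ρ n + w (ρ n) (ρ (n + 1)) :=
  Finset.sum_range_succ _ _

lemma config_succ (ρ : ℕ → V) (n : ℕ) :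
    config w ρ (n + 1) = succConfig w (config w ρ n) (ρ (n + 1)) := by
  simp [config, succConfig, EL_succ]

lemma EL_congr {ρ ρ' : ℕ → V} {m n : ℕ} (h : EqOn ρ' ρ (Iic m)) (hn : n ≤ m) :
    EL w ρ' n = EL w ρ n :=
  Finset.sum_congr rfl fun i hi => by
    have := Finset.mem_range.1 hi
    rw [h (show i ≤ m by omega), h (show i + 1 ≤ m by omega)]

lemma config_congr {ρ ρ' : ℕ → V} {m : ℕ} (h : EqOn ρ' ρ (Iic m)) :
    config w ρ' m = config w ρ m := by
  rw [config, config, h (Set.mem_Iic.2 le_rfl), EL_congr h le_rfl]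

lemma EL_sub_mul_le {W : ℕ} (hW : ∀ u v, -(W : ℤ) ≤ w u v) (ρ : ℕ → V) (m j : ℕ) :
    EL w ρ m - j * W ≤ EL w ρ (m + j) := by
  induction j with
  | zero => simp
  | succ j ih =>
    rw [← add_assoc, EL_succ]
    have := hW (ρ (m + j)) (ρ (m + j + 1))
    push_cast
    linarith

lemma prefixList_eq_append (ρ : ℕ → V) (n : ℕ) :
    prefixList ρ n = (List.range n).map ρ ++ [ρ n] := by
  simp [prefixList, List.range_succ]

lemma prefixList_congr {ρ ρ' : ℕ → V} {m : ℕ} (h : EqOn ρ' ρ (Iic m)) :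
    prefixList ρ' m = prefixList ρ m :=
  List.map_congr_left fun _ hi => h (Nat.lt_succ_iff.1 (List.mem_range.1 hi))

lemma prefixList_succ_eq_cons (ρ : ℕ → V) (n : ℕ) :
    prefixList ρ (n + 1) = ρ 0 :: prefixList (fun i => ρ (i + 1)) n := by
  simp [prefixList, List.range_succ_eq_map]

lemma ELl_prefixList (ρ : ℕ → V) (n : ℕ) : ELl w (prefixList ρ n) = EL w ρ n := by
  induction n generalizing ρ with
  | zero => simp [prefixList, ELl, EL]
  | succ n ih =>
    have ih' := ih (fun i => ρ (i + 1))
    rw [EL] at ih'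
    rw [prefixList_succ_eq_cons, EL, Finset.sum_range_succ', add_comm, ← ih']
    cases n with
    | zero => simp [prefixList, ELl]
    | succ n => rw [prefixList_succ_eq_cons, ELl]

lemma avgEL_le {ρ : ℕ → V} {b : ℝ} (hb : 0 ≤ b)
    (h : ∀ n, (EL w ρ n : ℝ) ≤ b) (n : ℕ) : avgEL w ρ n ≤ b := by
  refine div_le_of_le_mul₀ n.cast_nonneg hb ?_
  simpa [mul_comm] using Finset.sum_le_card_nsmul (Finset.range n) _ b fun i _ => h i

lemma energyLU_subset_avgEnergyL (cap : ℕ) :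
    EnergyLU w cap ⊆ AvgEnergyL w cap := fun _ hρ =>
  ⟨fun n => (hρ n).1, limsup_le_of_le (by isBoundedDefault) (Eventually.of_forall fun n =>
    EReal.coe_le_coe_iff.2 (avgEL_le cap.cast_nonneg (fun n => by exact_mod_cast (hρ n).2) n))⟩

lemma not_mem_AvgE_of_frequently {ρ : ℕ → V} {t s : ℝ} (hts : t < s)
    (h : ∃ᶠ n in atTop, s * n < ∑ i ∈ Finset.range n, (EL w ρ i : ℝ)) : ρ ∉ AvgE w t := by
  intro hρ
  have havg : ∃ᶠ n in atTop, (s : EReal) ≤ (avgEL w ρ n : EReal) := h.mono fun n hn => by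
    have hpos : (0 : ℝ) < n := by
      rcases n.eq_zero_or_pos with rfl | hn0
      · simp at hn
      · exact_mod_cast hn0
    exact EReal.coe_le_coe_iff.2 ((le_div_iff₀ hpos).2 hn.le)
  exact absurd (EReal.coe_le_coe_iff.1 ((le_limsup_of_frequently_le havg).trans hρ)) (not_le.2 hts)

end

lemma update_eqOn_Iic {α : Type*} (ρ : ℕ → α) (m : ℕ) (x : α) :
    EqOn (Function.update ρ (m + 1) x) ρ (Iic m) :=
  fun _ hi => update_of_ne (by rw [Set.mem_Iic] at hi; omega) _ _

lemma exists_frequently_of_forall_exists_extension {α : Type*} (P : (ℕ → α) → ℕ → Prop)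
    (hP : ∀ ρ ρ' m, EqOn ρ' ρ (Iic m) → P ρ m → P ρ' m)
    (hstep : ∀ ρ m, P ρ m → ∃ ρ' m', m < m' ∧ EqOn ρ' ρ (Iic m) ∧ P ρ' m')
    {ρ₀ : ℕ → α} {m₀ : ℕ} (h₀ : P ρ₀ m₀) :
    ∃ ρ, EqOn ρ ρ₀ (Iic m₀) ∧ ∃ᶠ m in atTop, P ρ m := by
  let S := {q : (ℕ → α) × ℕ // P q.1 q.2}
  choose next len hlt heq hnext using fun q : S => hstep q.1.1 q.1.2 q.2
  let seq : ℕ → S := fun k => (fun q => ⟨(next q, len q), hnext q⟩)^[k] ⟨(ρ₀, m₀), h₀⟩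
  have seq_succ : ∀ k, seq (k + 1) = ⟨(next (seq k), len (seq k)), hnext (seq k)⟩ :=
    fun k => Function.iterate_succ_apply' _ _ _
  set m : ℕ → ℕ := fun k => (seq k).1.2
  set r : ℕ → ℕ → α := fun k => (seq k).1.1
  have hm : StrictMono m := strictMono_nat_of_lt_succ fun k => by
    simp only [m, seq_succ]; exact hlt _
  have hr : ∀ k l, k ≤ l → EqOn (r l) (r k) (Iic (m k)) := by
    intro k l hkl
    induction l, hkl using Nat.le_induction with
    | base => exact fun _ _ => rfl
    | succ l hkl ih =>
      have : EqOn (r (l + 1)) (r l) (Iic (m l)) := by simp only [r, m, seq_succ]; exact heq _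
      exact (this.mono (Iic_subset_Iic.2 (hm.monotone hkl))).trans ih
  have hlim : ∀ k, EqOn (fun i => r i i) (r k) (Iic (m k)) := by
    intro k i hi
    rcases le_total i k with hik | hki
    · exact (hr i k hik (show i ≤ m i from hm.id_le i)).symm
    · exact hr k i hki hi
  refine ⟨fun i => r i i, hlim 0, frequently_atTop.2 fun N => ⟨m N, hm.id_le N, ?_⟩⟩
  exact hP _ _ _ (hlim N) (seq N).2

lemma Set.exists_eq_succ_of_monotone {α : Type*} {s : Set α} (hs : s.Finite) {f : ℕ → Set α}
    (hf : Monotone f) (hfs : ∀ n, f n ⊆ s) : ∃ n ≤ s.ncard, f (n + 1) = f n := by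
  by_contra! h
  have hcard : ∀ n ≤ s.ncard + 1, n ≤ (f n).ncard := by
    intro n hn
    induction n with
    | zero => exact Nat.zero_le _
    | succ n ih =>
      have hlt : (f n).ncard < (f (n + 1)).ncard :=
        Set.ncard_lt_ncard ((hf n.le_succ).lt_of_ne (h n (by omega)).symm) (hs.subset (hfs _))
      have := ih (by omega)
      omega
  have := hcard _ le_rfl
  have := Set.ncard_le_ncard (hfs (s.ncard + 1)) hs
  omega

namespace Arena

variable {V : Type}

lemma Player0Wins.mono {A : Arena V} {Win Win' : Set (ℕ → V)} (h : Win ⊆ Win') :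
    A.Player0Wins Win → A.Player0Wins Win' :=
  fun ⟨σ, hσ, hwin⟩ => ⟨σ, hσ, fun ρ hρ hc => h (hwin ρ hρ hc)⟩

section Consistency

variable (A : Arena V)

def ConsistentUpTo (σ : List V → V) (ρ : ℕ → V) (m : ℕ) : Prop :=
  ρ 0 = A.vI ∧ ∀ i < m, A.E (ρ i) (ρ (i + 1)) ∧ (ρ i ∈ A.V0 → ρ (i + 1) = σ (prefixList ρ i))

variable {A}

namespace ConsistentUpTo

variable {σ : List V → V} {ρ : ℕ → V} {m : ℕ}

lemma mono (h : A.ConsistentUpTo σ ρ m) {n : ℕ} (hn : n ≤ m) : A.ConsistentUpTo σ ρ n :=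
  ⟨h.1, fun i hi => h.2 i (by omega)⟩

lemma congr (h : A.ConsistentUpTo σ ρ m) {ρ' : ℕ → V} (hρ' : EqOn ρ' ρ (Iic m)) :
    A.ConsistentUpTo σ ρ' m := by
  refine ⟨(hρ' (Set.mem_Iic.2 (Nat.zero_le m))).trans h.1, fun i hi => ?_⟩
  rw [hρ' (Set.mem_Iic.2 hi.le), hρ' (Set.mem_Iic.2 (Nat.succ_le_of_lt hi)),
    prefixList_congr (hρ'.mono (Iic_subset_Iic.2 hi.le))]
  exact h.2 i hi

lemma update (h : A.ConsistentUpTo σ ρ m) {x : V} (hE : A.E (ρ m) x)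
    (hx : ρ m ∈ A.V0 → x = σ (prefixList ρ m)) :
    A.ConsistentUpTo σ (Function.update ρ (m + 1) x) (m + 1) := by
  have hagree := update_eqOn_Iic ρ m x
  refine ⟨(h.congr hagree).1, fun i hi => ?_⟩
  rcases Nat.lt_succ_iff_lt_or_eq.1 hi with hi | rfl
  · exact (h.congr hagree).2 i hi
  · rw [hagree (Set.mem_Iic.2 le_rfl), update_self, prefixList_congr hagree]
    exact ⟨hE, hx⟩

lemma exists_update (h : A.ConsistentUpTo σ ρ m) (hσ : A.IsStrategy A.V0 σ) :
    ∃ x, A.ConsistentUpTo σ (Function.update ρ (m + 1) x) (m + 1) := by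
  by_cases h0 : ρ m ∈ A.V0
  · refine ⟨_, h.update ?_ fun _ => rfl⟩
    rw [prefixList_eq_append]
    exact hσ _ _ h0
  · obtain ⟨x, hE⟩ := A.succ (ρ m)
    exact ⟨x, h.update hE fun h1 => absurd h1 h0⟩

lemma play_of_frequently (h : ∃ᶠ m in atTop, A.ConsistentUpTo σ ρ m) :
    A.Play ρ ∧ A.ConsistentWith A.V0 σ ρ := by
  have hall : ∀ n, A.ConsistentUpTo σ ρ (n + 1) := fun n =>
    let ⟨_, hm, hc⟩ := frequently_atTop.1 h (n + 1); hc.mono hm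
  exact ⟨⟨(hall 0).1, fun n => ((hall n).2 n n.lt_succ_self).1⟩,
    fun n => ((hall n).2 n n.lt_succ_self).2⟩

end ConsistentUpTo

end Consistency

section Cpre

variable (A : Arena V) (w : V → V → ℤ)

/-- Player 0's controllable predecessor. -/
def cpre (S : Set (V × ℤ)) : Set (V × ℤ) :=
  {p | (p.1 ∈ A.V0 → ∃ v, A.E p.1 v ∧ succConfig w p v ∈ S) ∧
    (p.1 ∉ A.V0 → ∀ v, A.E p.1 v → succConfig w p v ∈ S)}

variable {A w}

lemma mem_cpre_of_forall_succ {S T : Set (V × ℤ)} {p : V × ℤ} (hp : p ∈ A.cpre w S)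
    (hST : ∀ v, A.E p.1 v → succConfig w p v ∈ S → succConfig w p v ∈ T) : p ∈ A.cpre w T :=
  ⟨fun h0 => let ⟨v, hE, hv⟩ := hp.1 h0; ⟨v, hE, hST v hE hv⟩,
    fun h1 v hE => hST v hE (hp.2 h1 v hE)⟩

lemma cpre_mono : Monotone (A.cpre w) :=
  fun _ _ hST _ hp => mem_cpre_of_forall_succ hp fun _ _ hv => hST hv

/-- `config w ρ m ∉ A.cpre w Xᶜ` says that Player 0 cannot avoid `X` in one step. -/
lemma exists_consistentUpTo_succ {σ : List V → V} (hσ : A.IsStrategy A.V0 σ) {X : Set (V × ℤ)}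
    {ρ : ℕ → V} {m : ℕ} (hρ : A.ConsistentUpTo σ ρ m) (hX : config w ρ m ∉ A.cpre w Xᶜ) :
    ∃ ρ', EqOn ρ' ρ (Iic m) ∧ A.ConsistentUpTo σ ρ' (m + 1) ∧ config w ρ' (m + 1) ∈ X := by
  obtain ⟨x, hE, hx, hxX⟩ : ∃ x, A.E (ρ m) x ∧ (ρ m ∈ A.V0 → x = σ (prefixList ρ m)) ∧
      succConfig w (config w ρ m) x ∈ X := by
    by_cases h0 : ρ m ∈ A.V0
    · have hE : A.E (ρ m) (σ (prefixList ρ m)) := by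
        rw [prefixList_eq_append]; exact hσ _ _ h0
      refine ⟨_, hE, fun _ => rfl, ?_⟩
      by_contra hnot
      exact hX ⟨fun _ => ⟨_, hE, hnot⟩, fun h1 => absurd h0 h1⟩
    · by_contra! hall
      exact hX ⟨fun h => absurd h h0, fun _ v hE => hall v hE (fun h => absurd h h0)⟩
  refine ⟨_, update_eqOn_Iic ρ m x, hρ.update hE hx, ?_⟩
  rwa [config_succ, config_congr (update_eqOn_Iic ρ m x), update_self]

lemma exists_play_of_consistentUpTo {σ : List V → V} (hσ : A.IsStrategy A.V0 σ) {ρ : ℕ → V}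
    {m : ℕ} (hρ : A.ConsistentUpTo σ ρ m) :
    ∃ ρ', EqOn ρ' ρ (Iic m) ∧ A.Play ρ' ∧ A.ConsistentWith A.V0 σ ρ' := by
  obtain ⟨ρ', hρ', hfreq⟩ := exists_frequently_of_forall_exists_extension (A.ConsistentUpTo σ)
    (fun _ _ _ h hc => hc.congr h)
    (fun ρ m hρ => by
      obtain ⟨x, hx⟩ := hρ.exists_update hσ
      exact ⟨_, m + 1, m.lt_succ_self, update_eqOn_Iic ρ m x, hx⟩) hρ
  exact ⟨ρ', hρ', ConsistentUpTo.play_of_frequently hfreq⟩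

end Cpre

section Safety

variable (A : Arena V) (w : V → V → ℤ)

def safePre (cap : ℕ) : Set (V × ℤ) →o Set (V × ℤ) where
  toFun S := {p | 0 ≤ p.2 ∧ p.2 ≤ (cap : ℤ)} ∩ A.cpre w S
  monotone' _ _ hST := inter_subset_inter_right _ (cpre_mono hST)

/-- The configurations from which Player 0 can keep the energy level within `[0, cap]` forever. -/
def Safe (cap : ℕ) : Set (V × ℤ) := (A.safePre w cap).gfp

variable {A w}

lemma Safe_eq (cap : ℕ) :
    A.Safe w cap = {p | 0 ≤ p.2 ∧ p.2 ≤ (cap : ℤ)} ∩ A.cpre w (A.Safe w cap) :=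
  ((A.safePre w cap).isFixedPt_gfp).symm

lemma Safe_subset_cpre (cap : ℕ) : A.Safe w cap ⊆ A.cpre w (A.Safe w cap) :=
  fun _ hp => ((Safe_eq cap).subset hp).2

lemma Safe_mono : Monotone (A.Safe w) := fun _ _ h =>
  OrderHom.le_gfp _ fun p hp => by
    rw [Safe_eq] at hp
    exact ⟨⟨hp.1.1, hp.1.2.trans (by exact_mod_cast h)⟩, hp.2⟩

open Classical in
variable (A w) in
noncomputable def stayMove (S : Set (V × ℤ)) (p : V × ℤ) : V :=
  if h : ∃ x, A.E p.1 x ∧ succConfig w p x ∈ S then h.choose else (A.succ p.1).choose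

variable (A w) in
noncomputable def stayStrategy (S : Set (V × ℤ)) (l : List V) : V :=
  A.stayMove w S (l.getLast?.getD A.vI, ELl w l)

lemma stayMove_edge (S : Set (V × ℤ)) (p : V × ℤ) : A.E p.1 (A.stayMove w S p) := by
  unfold stayMove
  split_ifs with h
  exacts [h.choose_spec.1, (A.succ p.1).choose_spec]

lemma succConfig_stayMove_mem {S : Set (V × ℤ)} {p : V × ℤ}
    (h : ∃ x, A.E p.1 x ∧ succConfig w p x ∈ S) : succConfig w p (A.stayMove w S p) ∈ S := by
  rw [stayMove, dif_pos h]
  exact h.choose_spec.2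

lemma stayStrategy_isStrategy (S : Set (V × ℤ)) : A.IsStrategy A.V0 (A.stayStrategy w S) := by
  intro l v _
  simpa [stayStrategy] using stayMove_edge (A := A) S (v, ELl w (l ++ [v]))

lemma stayStrategy_prefixList (S : Set (V × ℤ)) (ρ : ℕ → V) (n : ℕ) :
    A.stayStrategy w S (prefixList ρ n) = A.stayMove w S (config w ρ n) := by
  rw [stayStrategy, ELl_prefixList, prefixList_eq_append, List.getLast?_concat, Option.getD_some]
  rfl

lemma config_mem_of_consistentWith_stayStrategy {S : Set (V × ℤ)} (hS : S ⊆ A.cpre w S)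
    (hI : (A.vI, 0) ∈ S) {ρ : ℕ → V} (hρ : A.Play ρ)
    (hc : A.ConsistentWith A.V0 (A.stayStrategy w S) ρ) (n : ℕ) : config w ρ n ∈ S := by
  induction n with
  | zero => simpa [config, EL, hρ.1] using hI
  | succ n ih =>
    rw [config_succ]
    by_cases h0 : ρ n ∈ A.V0
    · rw [hc n h0, stayStrategy_prefixList]
      exact succConfig_stayMove_mem ((hS ih).1 h0)
    · exact (hS ih).2 h0 _ (hρ.2 n)

lemma player0Wins_energyLU_of_mem_Safe {cap : ℕ} (h : (A.vI, 0) ∈ A.Safe w cap) :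
    A.Player0Wins (EnergyLU w cap) :=
  ⟨_, stayStrategy_isStrategy (A.Safe w cap), fun _ hρ hc n =>
    ((Safe_eq cap).subset (config_mem_of_consistentWith_stayStrategy
      (Safe_subset_cpre cap) h hρ hc n)).1⟩

end Safety

section Doomed

variable (A : Arena V) (w : V → V → ℤ)

def Doomed (p : V × ℤ) : Prop := ∀ cap, p ∉ A.Safe w cap

/-- Level `n` of Player 1's attractor to the doomed configurations outside `[0, c]`: from there
Player 1 can force such a configuration within `n` steps. -/
def escapeAttr (c : ℕ) : ℕ → Set (V × ℤ)
  | 0 => {p | A.Doomed w p ∧ (p.2 < 0 ∨ (c : ℤ) < p.2)}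
  | n + 1 => escapeAttr c n ∪ ({p | 0 ≤ p.2 ∧ p.2 ≤ (c : ℤ)} \ A.cpre w (escapeAttr c n)ᶜ)

variable {A w}

lemma not_doomed_iff {p : V × ℤ} : ¬ A.Doomed w p ↔ ∀ᶠ cap in atTop, p ∈ A.Safe w cap := by
  simp only [Doomed, not_forall, not_not]
  exact ⟨fun ⟨cap, h⟩ => eventually_atTop.2 ⟨cap, fun _ hc => Safe_mono hc h⟩,
    fun h => h.exists⟩

lemma eventually_mem_cpre [Finite V] {ι : Type*} {l : Filter ι} {S : ι → Set (V × ℤ)}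
    {p : V × ℤ} (hp : p ∈ A.cpre w {q | ∀ᶠ i in l, q ∈ S i}) : ∀ᶠ i in l, p ∈ A.cpre w (S i) := by
  by_cases h0 : p.1 ∈ A.V0
  · obtain ⟨v, hE, hv⟩ := hp.1 h0
    exact hv.mono fun i hi => ⟨fun _ => ⟨v, hE, hi⟩, fun h1 => absurd h0 h1⟩
  · have : ∀ᶠ i in l, ∀ v, A.E p.1 v → succConfig w p v ∈ S i :=
      eventually_all.2 fun v => by
        by_cases hE : A.E p.1 v
        · exact (hp.2 h0 v hE).mono fun _ hi _ => hi
        · exact Eventually.of_forall fun _ h => absurd h hE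
    exact this.mono fun i hi => ⟨fun h => absurd h h0, fun _ => hi⟩

lemma Doomed.not_mem_cpre [Finite V] {p : V × ℤ} (hp : A.Doomed w p) (h0 : 0 ≤ p.2) :
    p ∉ A.cpre w {q | A.Doomed w q}ᶜ := by
  intro h
  have h' : p ∈ A.cpre w {q | ∀ᶠ cap in atTop, q ∈ A.Safe w cap} :=
    cpre_mono (fun _ hq => not_doomed_iff.1 hq) h
  obtain ⟨cap, hcap, hle⟩ := ((eventually_mem_cpre h').and (eventually_ge_atTop p.2.toNat)).exists
  refine hp cap ?_
  rw [Safe_eq]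
  exact ⟨⟨h0, (Int.self_le_toNat _).trans (by exact_mod_cast hle)⟩, hcap⟩

lemma escapeAttr_mono (c : ℕ) : Monotone (A.escapeAttr w c) :=
  monotone_nat_of_le_succ fun _ => subset_union_left

lemma escapeAttr_eq_of_succ_eq {c n : ℕ} (h : A.escapeAttr w c (n + 1) = A.escapeAttr w c n) :
    ∀ k, n ≤ k → A.escapeAttr w c k = A.escapeAttr w c n := by
  intro k hk
  induction k, hk using Nat.le_induction with
  | base => rfl
  | succ k _ ih =>
    change A.escapeAttr w c k ∪ _ = _
    rw [ih]
    exact h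

/-- The attractor is complete after as many steps as there are configurations in `V × [0, c]`. -/
lemma escapeAttr_succ_card [Fintype V] (c : ℕ) :
    A.escapeAttr w c (Fintype.card V * (c + 1) + 1) =
      A.escapeAttr w c (Fintype.card V * (c + 1)) := by
  set R : Set (V × ℤ) := univ ×ˢ Icc 0 (c : ℤ)
  have hR : R.ncard = Fintype.card V * (c + 1) := by
    rw [show R = ↑((Finset.univ : Finset V) ×ˢ Finset.Icc 0 (c : ℤ)) by simp [R], ncard_coe_finset,
      Finset.card_product, Finset.card_univ, Int.card_Icc]
    simp
  have hsucc : ∀ n, A.escapeAttr w c (n + 1) ⊆ A.escapeAttr w c n ∪ R := by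
    rintro n p (hp | ⟨⟨h0, hc⟩, -⟩)
    exacts [Or.inl hp, Or.inr ⟨mem_univ _, h0, hc⟩]
  obtain ⟨n, hn, hfix⟩ := exists_eq_succ_of_monotone (toFinite R)
    (fun _ _ h => inter_subset_inter_left R (escapeAttr_mono c h)) (fun n => inter_subset_right)
  have hn' : A.escapeAttr w c (n + 1) = A.escapeAttr w c n := by
    refine (escapeAttr_mono c n.le_succ).antisymm' fun p hp => ?_
    rcases hsucc n hp with hp | hR'
    exacts [hp, (hfix.subset ⟨hp, hR'⟩).1]
  rw [hR] at hn
  rw [escapeAttr_eq_of_succ_eq hn' _ (by omega), escapeAttr_eq_of_succ_eq hn' _ hn]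

/-- Otherwise the doomed configurations of `V × [0, c]` outside the attractor, together with a
large enough `Safe cap`, would form a set Player 0 can stay in while keeping the energy level
within `[0, cap]`. -/
lemma Doomed.mem_escapeAttr [Fintype V] {c : ℕ} {p : V × ℤ} (hp : A.Doomed w p) (h0 : 0 ≤ p.2) :
    p ∈ A.escapeAttr w c (Fintype.card V * (c + 1)) := by
  set K := Fintype.card V * (c + 1)
  have hzero : A.escapeAttr w c 0 ⊆ A.escapeAttr w c K := escapeAttr_mono c (Nat.zero_le K)
  by_cases hc : (c : ℤ) < p.2
  · exact hzero ⟨hp, Or.inr hc⟩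
  by_contra hpK
  obtain ⟨cap, hcap, hcapc⟩ : ∃ cap : ℕ, (∀ q ∈ (Finset.univ ×ˢ Finset.Icc 0 (c : ℤ)), ∀ v,
      ¬ A.Doomed w (succConfig w q v) → succConfig w q v ∈ A.Safe w cap) ∧ c ≤ cap := by
    refine (((eventually_all_finset _).2 fun q _ => eventually_all.2 fun v => ?_).and
      (eventually_ge_atTop c)).exists
    by_cases hd : A.Doomed w (succConfig w q v)
    · exact Eventually.of_forall fun _ h => absurd hd h
    · exact (not_doomed_iff.1 hd).mono fun _ h _ => h
  set G := {q : V × ℤ | A.Doomed w q ∧ 0 ≤ q.2 ∧ q.2 ≤ c ∧ q ∉ A.escapeAttr w c K}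
  have hG : G ∪ A.Safe w cap ⊆ A.safePre w cap (G ∪ A.Safe w cap) := by
    rintro q (⟨-, hq0, hqc, hqK⟩ | hq)
    · have hcpre : q ∈ A.cpre w (A.escapeAttr w c K)ᶜ := by
        by_contra h
        rw [← escapeAttr_succ_card] at hqK
        exact hqK (Or.inr ⟨⟨hq0, hqc⟩, h⟩)
      refine ⟨⟨hq0, hqc.trans (by exact_mod_cast hcapc)⟩,
        mem_cpre_of_forall_succ hcpre fun v _ hv => ?_⟩
      by_cases hd : A.Doomed w (succConfig w q v)
      · have hbounds := not_or.1 fun h => hv (hzero ⟨hd, h⟩)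
        exact Or.inl ⟨hd, not_lt.1 hbounds.1, not_lt.1 hbounds.2, hv⟩
      · exact Or.inr (hcap q (by simp [hq0, hqc]) v hd)
    · have hq' := (Safe_eq cap).subset hq
      exact ⟨hq'.1, cpre_mono subset_union_right hq'.2⟩
  exact hp cap (OrderHom.le_gfp _ hG (Or.inl ⟨hp, h0, not_lt.1 hc, hpK⟩))

end Doomed

section Strategy

variable {A : Arena V} {w : V → V → ℤ} {σ : List V → V}

lemma exists_consistentUpTo_mem_escapeAttr_zero (hσ : A.IsStrategy A.V0 σ) {c : ℕ} (k : ℕ)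
    {ρ : ℕ → V} {m : ℕ} (hρ : A.ConsistentUpTo σ ρ m) (hk : config w ρ m ∈ A.escapeAttr w c k) :
    ∃ ρ' m', m ≤ m' ∧ m' ≤ m + k ∧ EqOn ρ' ρ (Iic m) ∧ A.ConsistentUpTo σ ρ' m' ∧
      config w ρ' m' ∈ A.escapeAttr w c 0 := by
  induction k generalizing ρ m with
  | zero => exact ⟨ρ, m, le_rfl, le_rfl, fun _ _ => rfl, hρ, hk⟩
  | succ k ih =>
    rcases hk with hk | ⟨-, hk⟩
    · obtain ⟨ρ', m', h₁, h₂, h₃, h₄, h₅⟩ := ih hρ hk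
      exact ⟨ρ', m', h₁, by omega, h₃, h₄, h₅⟩
    · obtain ⟨ρ₁, hρ₁ρ, hρ₁, hk₁⟩ := exists_consistentUpTo_succ hσ hρ hk
      obtain ⟨ρ', m', h₁, h₂, h₃, h₄, h₅⟩ := ih hρ₁ hk₁
      exact ⟨ρ', m', by omega, by omega, (h₃.mono (Iic_subset_Iic.2 m.le_succ)).trans hρ₁ρ, h₄, h₅⟩

lemma exists_consistentUpTo_doomed [Finite V] (hσ : A.IsStrategy A.V0 σ)
    (hnn : ∀ ρ m, A.ConsistentUpTo σ ρ m → 0 ≤ EL w ρ m) (L : ℕ) {ρ : ℕ → V} {m : ℕ}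
    (hρ : A.ConsistentUpTo σ ρ m) (hd : A.Doomed w (config w ρ m)) :
    ∃ ρ', EqOn ρ' ρ (Iic m) ∧ A.ConsistentUpTo σ ρ' (m + L) ∧ A.Doomed w (config w ρ' (m + L)) := by
  induction L with
  | zero => exact ⟨ρ, fun _ _ => rfl, hρ, hd⟩
  | succ L ih =>
    obtain ⟨ρ₁, hρ₁ρ, hρ₁, hd₁⟩ := ih
    obtain ⟨ρ', hρ'ρ₁, hρ', hd'⟩ :=
      exists_consistentUpTo_succ hσ hρ₁ (hd₁.not_mem_cpre (hnn _ _ hρ₁))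
    exact ⟨ρ', (hρ'ρ₁.mono (Iic_subset_Iic.2 (by omega))).trans hρ₁ρ, hρ', hd'⟩

lemma exists_consistentUpTo_doomed_sum_gt [Fintype V] (hσ : A.IsStrategy A.V0 σ)
    (hnn : ∀ ρ m, A.ConsistentUpTo σ ρ m → 0 ≤ EL w ρ m) {W : ℕ} (hW : ∀ u v, -(W : ℤ) ≤ w u v)
    (T : ℕ) {ρ : ℕ → V} {m : ℕ} (hρ : A.ConsistentUpTo σ ρ m) (hd : A.Doomed w (config w ρ m)) :
    ∃ ρ' m', m < m' ∧ EqOn ρ' ρ (Iic m) ∧ A.ConsistentUpTo σ ρ' m' ∧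
      A.Doomed w (config w ρ' m') ∧ (T * m' : ℤ) < ∑ i ∈ Finset.range m', EL w ρ' i := by
  set n := Fintype.card V
  set a := T * (n * W + 1)
  set L := T * (n * (a + 1) + m) + 1
  set c := L * W + a
  obtain ⟨ρ₁, m₁, hm₁, hm₁', hρ₁ρ, hρ₁, hd₁, hc₁⟩ := exists_consistentUpTo_mem_escapeAttr_zero hσ _
    hρ (hd.mem_escapeAttr (c := c) (hnn _ _ hρ))
  replace hc₁ : (c : ℤ) < EL w ρ₁ m₁ := hc₁.resolve_left (not_lt.2 (hnn _ _ hρ₁))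
  obtain ⟨ρ₂, hρ₂ρ₁, hρ₂, hd₂⟩ := exists_consistentUpTo_doomed hσ hnn L hρ₁ hd₁
  refine ⟨ρ₂, m₁ + L, by omega, (hρ₂ρ₁.mono (Iic_subset_Iic.2 hm₁)).trans hρ₁ρ, hρ₂, hd₂, ?_⟩
  have hdrain : ∀ j ∈ Finset.range L, ((a + 1 : ℕ) : ℤ) ≤ EL w ρ₂ (m₁ + j) := by
    intro j hj
    have hjW : (j : ℤ) * W ≤ L * W := by
      exact_mod_cast Nat.mul_le_mul_right W (Finset.mem_range.1 hj).le
    have := EL_sub_mul_le hW ρ₂ m₁ j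
    rw [EL_congr hρ₂ρ₁ le_rfl] at this
    push_cast [c] at hc₁ ⊢
    linarith
  have hsum : ((L * (a + 1) : ℕ) : ℤ) ≤ ∑ i ∈ Finset.range (m₁ + L), EL w ρ₂ i := by
    rw [Finset.sum_range_add]
    have hpre : 0 ≤ ∑ i ∈ Finset.range m₁, EL w ρ₂ i :=
      Finset.sum_nonneg fun _ hi => hnn _ _ (hρ₂.mono (by have := Finset.mem_range.1 hi; omega))
    have := Finset.sum_le_sum hdrain
    simp only [Finset.sum_const, Finset.card_range, nsmul_eq_mul] at this
    push_cast at this ⊢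
    linarith
  have harith : T * (m + n * (c + 1) + L) + 1 = L * (a + 1) := by simp only [c, L, a]; ring
  have hlen : T * (m₁ + L) ≤ T * (m + n * (c + 1) + L) :=
    Nat.mul_le_mul_left T (Nat.add_le_add_right hm₁' L)
  exact lt_of_lt_of_le (by exact_mod_cast (show T * (m₁ + L) < L * (a + 1) by omega)) hsum

lemma exists_cap_of_player0Wins_avgEnergyL [Fintype V] {t : ℕ}
    (h : A.Player0Wins (AvgEnergyL w t)) : ∃ cap : ℕ, A.Player0Wins (EnergyLU w cap) := by
  obtain ⟨σ, hσ, hwin⟩ := h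
  by_contra! hno
  have hd : A.Doomed w (config w (fun _ => A.vI) 0) := fun cap h =>
    hno cap (player0Wins_energyLU_of_mem_Safe (by simpa [config, EL] using h))
  have hnn : ∀ ρ m, A.ConsistentUpTo σ ρ m → 0 ≤ EL w ρ m := fun ρ m hρ => by
    obtain ⟨ρ', hρ'ρ, hρ', hc⟩ := exists_play_of_consistentUpTo hσ hρ
    rw [← EL_congr hρ'ρ le_rfl]
    exact (hwin ρ' hρ' hc).1 m
  obtain ⟨W, hW⟩ : ∃ W : ℕ, ∀ u v, -(W : ℤ) ≤ w u v := by
    obtain ⟨M, hM⟩ := Finite.exists_le fun p : V × V => -w p.1 p.2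
    exact ⟨M.toNat, fun u v => by have := hM (u, v); dsimp only at this; omega⟩
  let P : (ℕ → V) → ℕ → Prop := fun ρ m => A.ConsistentUpTo σ ρ m ∧ A.Doomed w (config w ρ m) ∧
    ((t + 1 : ℕ) * m : ℤ) < ∑ i ∈ Finset.range m, EL w ρ i
  have hP : ∀ ρ ρ' m, EqOn ρ' ρ (Iic m) → P ρ m → P ρ' m := fun ρ ρ' m h ⟨hc, hd, hs⟩ => by
    refine ⟨hc.congr h, config_congr h ▸ hd, hs.trans_eq (Finset.sum_congr rfl fun i hi => ?_)⟩
    exact (EL_congr h (Finset.mem_range.1 hi).le).symm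
  have hstep : ∀ ρ m, P ρ m → ∃ ρ' m', m < m' ∧ EqOn ρ' ρ (Iic m) ∧ P ρ' m' :=
    fun _ _ ⟨hc, hd, _⟩ => exists_consistentUpTo_doomed_sum_gt hσ hnn hW _ hc hd
  obtain ⟨ρ₀, m₀, -, -, h₀⟩ := exists_consistentUpTo_doomed_sum_gt hσ hnn hW (t + 1)
    (ρ := fun _ => A.vI) ⟨rfl, fun _ h => absurd h (Nat.not_lt_zero _)⟩ hd
  obtain ⟨ρ, -, hfreq⟩ := exists_frequently_of_forall_exists_extension P hP hstep h₀
  obtain ⟨hρ, hc⟩ := ConsistentUpTo.play_of_frequently (hfreq.mono fun _ h => h.1)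
  refine not_mem_AvgE_of_frequently (lt_add_one (t : ℝ)) (hfreq.mono fun m hm => ?_)
    (hwin ρ hρ hc).2
  exact_mod_cast hm.2.2

end Strategy

end Arena

/-- Player 0 wins `(A, AvgEnergy_L(w,t))` for some threshold `t ∈ ℕ`
iff Player 0 wins `(A, Energy_LU(w,cap))` for some capacity `cap ∈ ℕ`. -/
theorem exists_threshold_iff_exists_cap {V : Type} [Fintype V] (A : Arena V)
    (w : V → V → ℤ) :
    (∃ t : ℕ, A.Player0Wins (AvgEnergyL w (t : ℝ))) ↔
      (∃ cap : ℕ, A.Player0Wins (EnergyLU w cap)) :=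
  ⟨fun ⟨_, ht⟩ => A.exists_cap_of_player0Wins_avgEnergyL ht,
    fun ⟨cap, hcap⟩ => ⟨cap, hcap.mono (energyLU_subset_avgEnergyL cap)⟩⟩
end

section
/- Let A be an arena with recharge weight function w, cap ∈ ℕ, and let M = ({0,…,cap} ∪ {⊥}, cap, Upd) be the memory structure with Upd(⊥,(v,v')) = ⊥ and, for c ∈ {0,…,cap}: Upd(c,(v,v')) = cap if (v,v') is labelled R, Upd(c,(v,v')) = c + w(v,v') if c + w(v,v') ≥ 0, and Upd(c,(v,v')) = ⊥ otherwise. Let ρ = v_0 v_1 v_2 ⋯ be a play in A with extended play (v_0,m_0)(v_1,m_1)(v_2,m_2)⋯ in A×M. Then for every n: (1) if EL_cap(v_0⋯v_s) ≥ 0 for all s ≤ n, then m_n = EL_cap(v_0⋯v_n); (2) if EL_cap(v_0⋯v_s) < 0 for some s ≤ n, then m_n = ⊥. -/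
/-- The memory structure with states `{0, …, cap} ∪ {⊥}` (`⊥` is `none`), initial
state `cap`, that tracks the recharge energy level. -/
def rechargeMem {V : Type} (w : V → V → Option ℤ) (cap : ℕ) :
    Mem V (Option (Fin (cap + 1))) where
  mI := some (Fin.last cap)
  upd := fun m u v =>
    match m with
    | none => none
    | some c =>
      match w u v with
      | none => some (Fin.last cap)
      | some k =>
        if h : 0 ≤ ((c : ℕ) : ℤ) + k ∧ ((c : ℕ) : ℤ) + k ≤ (cap : ℤ) then
          some ⟨(((c : ℕ) : ℤ) + k).toNat, by omega⟩
        else none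

theorem Nat.forall_le_succ_iff {p : ℕ → Prop} {n : ℕ} :
    (∀ s ≤ n + 1, p s) ↔ (∀ s ≤ n, p s) ∧ p (n + 1) := by
  simp only [Nat.le_succ_iff_eq_or_le, or_imp, forall_and, forall_eq, and_comm]

theorem Mem.track_succ {V M : Type} (mem : Mem V M) (ρ : ℕ → V) (n : ℕ) :
    mem.track ρ (n + 1) = mem.upd (mem.track ρ n) (ρ n) (ρ (n + 1)) :=
  rfl

section rechargeMem

variable {V : Type} {w : V → V → Option ℤ} {cap : ℕ}

theorem rechargeMem_upd_none (u v : V) : (rechargeMem w cap).upd none u v = none :=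
  rfl

theorem rechargeMem_upd_of_recharge (c : Fin (cap + 1)) {u v : V} (h : w u v = none) :
    (rechargeMem w cap).upd (some c) u v = some (Fin.last cap) := by
  simp [rechargeMem, h]

/-- The check `≤ cap` in the update never fails, because weights are non-positive. -/
theorem rechargeMem_upd_of_weight (c : Fin (cap + 1)) {u v : V} {k : ℤ} (h : w u v = some k)
    (hk : k ≤ 0) :
    ((rechargeMem w cap).upd (some c) u v).map (fun c : Fin (cap + 1) => ((c : ℕ) : ℤ)) =
      if 0 ≤ (c : ℤ) + k then some ((c : ℤ) + k) else none := by
  have hc : (c : ℤ) + k ≤ cap := by omega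
  by_cases h0 : 0 ≤ (c : ℤ) + k <;> simp [rechargeMem, h, h0, hc]

theorem ELcap_succ_of_recharge {ρ : ℕ → V} {n : ℕ} (h : w (ρ n) (ρ (n + 1)) = none) :
    ELcap w cap ρ (n + 1) = cap := by
  simp [ELcap, h]

theorem ELcap_succ_of_weight {ρ : ℕ → V} {n : ℕ} {k : ℤ} (h : w (ρ n) (ρ (n + 1)) = some k) :
    ELcap w cap ρ (n + 1) = ELcap w cap ρ n + k := by
  simp [ELcap, h]

theorem rechargeMem_track_map_val {A : Arena V} (hw : RechargeWeights A w) {ρ : ℕ → V}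
    (hρ : ∀ n, A.E (ρ n) (ρ (n + 1))) (n : ℕ) :
    ((rechargeMem w cap).track ρ n).map (fun c : Fin (cap + 1) => ((c : ℕ) : ℤ)) =
      if ∀ s ≤ n, 0 ≤ ELcap w cap ρ s then some (ELcap w cap ρ n) else none := by
  induction n with
  | zero => simp [Mem.track, rechargeMem, ELcap]
  | succ n ih =>
    simp only [Nat.forall_le_succ_iff]
    by_cases hpos : ∀ s ≤ n, 0 ≤ ELcap w cap ρ s
    · rw [if_pos hpos] at ih
      obtain ⟨c, hc, hcEL⟩ := Option.map_eq_some_iff.mp ih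
      simp only [Mem.track_succ, hc, and_iff_right hpos]
      cases hwn : w (ρ n) (ρ (n + 1)) with
      | none =>
        simp [rechargeMem_upd_of_recharge c hwn, ELcap_succ_of_recharge hwn]
      | some k =>
        rw [rechargeMem_upd_of_weight c hwn (hw _ _ (hρ n) k hwn), ELcap_succ_of_weight hwn, hcEL]
    · have hnone : (rechargeMem w cap).track ρ n = none := by
        simpa [hpos] using ih
      rw [Mem.track_succ, hnone, rechargeMem_upd_none]
      simp [hpos]

end rechargeMem

theorem rechargeMem_tracks_general {V : Type} (A : Arena V)
    (w : V → V → Option ℤ) (hw : RechargeWeights A w) (cap : ℕ)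
    (ρ : ℕ → V) (hρ : A.Play ρ) (n : ℕ) :
    ((∀ s ≤ n, 0 ≤ ELcap w cap ρ s) →
      ∃ c : Fin (cap + 1), Mem.track (rechargeMem w cap) ρ n = some c ∧
        ((c : ℕ) : ℤ) = ELcap w cap ρ n) ∧
    ((∃ s ≤ n, ELcap w cap ρ s < 0) → Mem.track (rechargeMem w cap) ρ n = none) := by
  have htrack := rechargeMem_track_map_val (cap := cap) hw hρ.2 n
  refine ⟨fun hpos => ?_, fun ⟨s, hs, hneg⟩ => ?_⟩
  · rw [if_pos hpos] at htrack
    exact Option.map_eq_some_iff.mp htrack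
  · rw [if_neg fun hpos => (hpos s hs).not_gt hneg] at htrack
    exact Option.map_eq_none_iff.mp htrack

/-- The memory structure `rechargeMem` correctly tracks the recharge
energy level: as long as it is non-negative the memory state equals it, and once it
has been negative the memory state is `⊥`. -/
theorem rechargeMem_tracks {V : Type} [Fintype V] (A : Arena V)
    (w : V → V → Option ℤ) (hw : RechargeWeights A w) (cap : ℕ)
    (ρ : ℕ → V) (hρ : A.Play ρ) (n : ℕ) :
    ((∀ s ≤ n, 0 ≤ ELcap w cap ρ s) →
      ∃ c : Fin (cap + 1), Mem.track (rechargeMem w cap) ρ n = some c ∧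
        ((c : ℕ) : ℤ) = ELcap w cap ρ n) ∧
    ((∃ s ≤ n, ELcap w cap ρ s < 0) → Mem.track (rechargeMem w cap) ρ n = none) :=
  rechargeMem_tracks_general A w hw cap ρ hρ n
end

section
/- Let A be an arena with recharge weight function w, cap ∈ ℕ, t ∈ ℕ, and let M be the memory structure with states {0,…,cap} ∪ {⊥}, initial state cap, Upd(⊥,e) = ⊥, and Upd(c,(v,v')) = cap if (v,v') is labelled R, = c + w(v,v') if c + w(v,v') ≥ 0, = ⊥ otherwise. Define the weight function w' on A×M by w'((v,c),(v',m)) = c for c ∈ {0,…,cap} and w'((v,⊥),(v',⊥)) = t+1. Let ρ = v_0 v_1 v_2 ⋯ be a play in A with extended play ρ' = (v_0,m_0)(v_1,m_1)⋯. Then: (1) if EL_cap(v_0⋯v_s) ≥ 0 for all s, then limsup_{n→∞} (1/n) EL'((v_0,m_0)⋯(v_{n−1},m_{n−1})) = limsup_{n→∞} (1/n) Σ_{i=0}^{n−1} EL_cap(v_0⋯v_i), where EL' is the sum of w'-weights along the extended play prefix; (2) if EL_cap(v_0⋯v_s) < 0 for some s, then limsup_{n→∞} (1/n) EL'((v_0,m_0)⋯(v_{n−1},m_{n−1}))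 = t+1. -/
/-- The weight function `w'` on the expanded arena: the weight of an edge is the
energy level stored in the memory component of its source, and `t + 1` at `⊥`. -/
def rechargeMPweight {V : Type} (cap t : ℕ) :
    (V × Option (Fin (cap + 1))) → (V × Option (Fin (cap + 1))) → ℤ :=
  fun p _ =>
    match p.2 with
    | some c => ((c : ℕ) : ℤ)
    | none => (t : ℤ) + 1


/-! The memory state of `rechargeMem` is `some c` exactly as long as the recharge energy level
has stayed non-negative, and then `c` is that level (it never exceeds `cap`, since all weights
are non-positive). So while the play is winning, the `w'`-weights are the recharge energy levels,
and the two averages agree termwise. Once the level drops below zero the memory is stuck in `⊥`,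
every later `w'`-weight is `t + 1`, and the mean payoff tends to `t + 1` by Cesàro. -/

section RechargeMem

variable {V : Type} {w : V → V → Option ℤ} {cap : ℕ} {ρ : ℕ → V}

lemma ELcap_le_cap {A : Arena V} (hw : RechargeWeights A w) (hρ : A.Play ρ) (n : ℕ) :
    ELcap w cap ρ n ≤ cap := by
  induction n with
  | zero => simp [ELcap]
  | succ n ih =>
    rcases hk : w (ρ n) (ρ (n + 1)) with _ | k
    · simp [ELcap, hk]
    · have := hw _ _ (hρ.2 n) k hk
      simp only [ELcap, hk]
      omega

lemma rechargeMem_track_eq_some {n : ℕ} {c : Fin (cap + 1)}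
    (h : (rechargeMem w cap).track ρ n = some c) : ((c : ℕ) : ℤ) = ELcap w cap ρ n := by
  induction n generalizing c with
  | zero =>
    cases h
    simp [ELcap]
  | succ n ih =>
    rcases hm : (rechargeMem w cap).track ρ n with _ | c₀
    all_goals rw [Mem.track, hm] at h
    · simp [rechargeMem] at h
    · have hc₀ := ih hm
      rcases hk : w (ρ n) (ρ (n + 1)) with _ | k
      · simp only [rechargeMem, hk, Option.some.injEq] at h
        simp [← h, ELcap, hk]
      · simp only [rechargeMem, hk] at h
        split_ifs at h with hbd
        cases h
        simp only [ELcap, hk]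
        omega

lemma rechargeMem_track_eq_none_of_neg {s : ℕ} (hs : ELcap w cap ρ s < 0) :
    ∀ n ≥ s, (rechargeMem w cap).track ρ n = none := by
  intro n hn
  induction n, hn using Nat.le_induction with
  | base =>
    by_contra hne
    obtain ⟨c, hc⟩ := Option.ne_none_iff_exists'.mp hne
    have := rechargeMem_track_eq_some hc
    omega
  | succ n _ ih => rw [Mem.track, ih]; rfl

lemma rechargeMem_track_ne_none {A : Arena V} (hw : RechargeWeights A w) (hρ : A.Play ρ)
    {n : ℕ} (hpos : ∀ i ≤ n, 0 ≤ ELcap w cap ρ i) : (rechargeMem w cap).track ρ n ≠ none := by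
  induction n with
  | zero => simp [Mem.track, rechargeMem]
  | succ n ih =>
    obtain ⟨c, hc⟩ := Option.ne_none_iff_exists'.mp (ih fun i hi => hpos i (by omega))
    rcases hk : w (ρ n) (ρ (n + 1)) with _ | k
    · rw [Mem.track, hc]
      simp [rechargeMem, hk]
    · have hbd : 0 ≤ ((c : ℕ) : ℤ) + k ∧ ((c : ℕ) : ℤ) + k ≤ cap := by
        have hstep : ELcap w cap ρ (n + 1) = ELcap w cap ρ n + k := by simp [ELcap, hk]
        rw [rechargeMem_track_eq_some hc, ← hstep]
        exact ⟨hpos _ le_rfl, ELcap_le_cap hw hρ _⟩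
      rw [Mem.track, hc]
      simp [rechargeMem, hk, hbd]

lemma EL_rechargeMPweight_of_nonneg {A : Arena V} (hw : RechargeWeights A w) (hρ : A.Play ρ)
    (hpos : ∀ s, 0 ≤ ELcap w cap ρ s) (t n : ℕ) :
    EL (rechargeMPweight cap t) (extendPlay (rechargeMem w cap) ρ) n =
      ∑ i ∈ Finset.range n, ELcap w cap ρ i := by
  refine Finset.sum_congr rfl fun i _ => ?_
  obtain ⟨c, hc⟩ := Option.ne_none_iff_exists'.mp
    (rechargeMem_track_ne_none (n := i) hw hρ fun j _ => hpos j)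
  simp [rechargeMPweight, extendPlay, hc, rechargeMem_track_eq_some hc]

lemma tendsto_EL_rechargeMPweight_div_of_neg {s : ℕ} (hs : ELcap w cap ρ s < 0) (t : ℕ) :
    Filter.Tendsto
      (fun n => (EL (rechargeMPweight cap t) (extendPlay (rechargeMem w cap) ρ) n : ℝ) / n)
      Filter.atTop (nhds ((t : ℝ) + 1)) := by
  have hweight : (fun _ => (t : ℝ) + 1) =ᶠ[Filter.atTop] fun i =>
      (rechargeMPweight cap t (extendPlay (rechargeMem w cap) ρ i)
        (extendPlay (rechargeMem w cap) ρ (i + 1)) : ℝ) := by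
    filter_upwards [Filter.eventually_ge_atTop s] with i hi
    simp [rechargeMPweight, extendPlay, rechargeMem_track_eq_none_of_neg hs i hi]
  convert (tendsto_const_nhds.congr' hweight).cesaro using 2 with n
  simp [EL, div_eq_inv_mul]

end RechargeMem

theorem rechargeMem_limsup_general {V : Type} (A : Arena V)
    (w : V → V → Option ℤ) (hw : RechargeWeights A w) (cap t : ℕ)
    (ρ : ℕ → V) (hρ : A.Play ρ) :
    ((∀ s, 0 ≤ ELcap w cap ρ s) →
      Filter.limsup
        (fun n => (((EL (rechargeMPweight cap t) (extendPlay (rechargeMem w cap) ρ) n : ℝ)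
          / (n : ℝ)) : EReal)) Filter.atTop =
      Filter.limsup (fun n => (avgELcap w cap ρ n : EReal)) Filter.atTop) ∧
    ((∃ s, ELcap w cap ρ s < 0) →
      Filter.limsup
        (fun n => (((EL (rechargeMPweight cap t) (extendPlay (rechargeMem w cap) ρ) n : ℝ)
          / (n : ℝ)) : EReal)) Filter.atTop = (((t : ℝ) + 1 : ℝ) : EReal)) := by
  refine ⟨fun hpos => ?_, fun ⟨s, hs⟩ => ?_⟩
  · congr 1
    funext n
    rw [← EReal.coe_div, EL_rechargeMPweight_of_nonneg hw hρ hpos, avgELcap]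
    push_cast
    rfl
  · exact (EReal.tendsto_coe.mpr (tendsto_EL_rechargeMPweight_div_of_neg hs t)).limsup_eq

/-- Along the extended play, the limsup of the mean of the
`w'`-weights equals the limsup of the averages of the recharge energy levels if the
recharge energy level never goes negative, and equals `t + 1` otherwise. -/
theorem rechargeMem_limsup {V : Type} [Fintype V] (A : Arena V)
    (w : V → V → Option ℤ) (hw : RechargeWeights A w) (cap t : ℕ)
    (ρ : ℕ → V) (hρ : A.Play ρ) :
    ((∀ s, 0 ≤ ELcap w cap ρ s) →
      Filter.limsup
        (fun n => (((EL (rechargeMPweight cap t) (extendPlay (rechargeMem w cap) ρ) n : ℝ)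
          / (n : ℝ)) : EReal)) Filter.atTop =
      Filter.limsup (fun n => (avgELcap w cap ρ n : EReal)) Filter.atTop) ∧
    ((∃ s, ELcap w cap ρ s < 0) →
      Filter.limsup
        (fun n => (((EL (rechargeMPweight cap t) (extendPlay (rechargeMem w cap) ρ) n : ℝ)
          / (n : ℝ)) : EReal)) Filter.atTop = (((t : ℝ) + 1 : ℝ) : EReal)) :=
  rechargeMem_limsup_general A w hw cap t ρ hρ
end
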